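/- Let s ≥ 1 and N = (s+1)(s+2)/2, let c ∈ ℝ^s have all entries nonzero, and let h₁,…,h_K ∈ ℝ[z₁,…,z_s] with each h_k of the form h_k(z) = z_{a_k} z_{b_k} − c_{a_k} c_{b_k} for indices a_k, b_k ∈ {0,1,…,s} (with the convention z₀ := 1 and c₀ := 1). Suppose that for each i ∈ {1,…,s} there exist polynomials λ^{(i)}₁,…,λ^{(i)}_K of total degree at most 1 with z_i − c_i = Σ_{k=1}^K λ^{(i)}_k h_k. Then for every r ∈ {2,…,N} there exist a positive semidefinite matrix Q^r ∈ ℝ^{N×N} with [Q^r]ᵣᵣ = 1 and [Q^r]_{pq} = 0 whenever p ∉ {1, r} or q ∉ {1, r}, and a positive semidefinite matrix U^r ∈ ℝ^{KN×KN}, such that for all z ∈ ℝ^s: u₂(z)ᵀ Q^r u₂(z) = (h(z) ⊗ u₂(z))ᵀ U^r (h(z) ⊗ u₂(z)). -/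

import Mathlib

open Matrix

noncomputable section

/-- Index set for the monomials of degree at most `2` in `s` variables: pairs
`(i, j)` with `i ≤ j` in `Fin (s+1)`, where index `0` stands for the constant `1`.
Its cardinality is `N = (s+1)(s+2)/2`. -/
abbrev MonIdx (s : ℕ) := {p : Fin (s + 1) × Fin (s + 1) // p.1 ≤ p.2}

/-- The index of the constant monomial `1` (the "first" entry of `u₂`). -/
def idx1 (s : ℕ) : MonIdx s := ⟨(0, 0), le_refl _⟩

/-- Extended variable vector: `extv z 0 = 1` and `extv z (i+1) = z i`. -/
def extv {s : ℕ} (z : Fin s → ℝ) : Fin (s + 1) → ℝ := Fin.cons 1 z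

/-- `u₂ z` : the vector of all monomials of degree at most `2` in `z`;
its entry at `⟨(i, j), _⟩` is `z_i z_j` (with the convention `z_0 = 1`). -/
def u2 {s : ℕ} (z : Fin s → ℝ) : MonIdx s → ℝ := fun p => extv z p.1.1 * extv z p.1.2

/-- `E^r` : the diagonal matrix whose `(r, r)` entry is `1` and all others are `0`. -/
def Emat {s : ℕ} (r : MonIdx s) : Matrix (MonIdx s) (MonIdx s) ℝ :=
  Matrix.single r r 1

/-- `Q^r` : the symmetric matrix whose only nonzero entries are
`[Q^r]₁₁ = ((u₂ z₀)ᵣ)²`, `[Q^r]₁ᵣ = [Q^r]ᵣ₁ = -(u₂ z₀)ᵣ` and `[Q^r]ᵣᵣ = 1`. -/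
def Qmat {s : ℕ} (z₀ : Fin s → ℝ) (r : MonIdx s) : Matrix (MonIdx s) (MonIdx s) ℝ :=
  Matrix.single (idx1 s) (idx1 s) ((u2 z₀ r) ^ 2)
    + Matrix.single (idx1 s) r (-(u2 z₀ r))
    + Matrix.single r (idx1 s) (-(u2 z₀ r))
    + Matrix.single r r 1

/-- Kronecker product of two vectors: `(v ⊗ u)_{(k,t)} = v_k u_t`. -/
def kron {K N : Type*} (v : K → ℝ) (u : N → ℝ) : K × N → ℝ := fun p => v p.1 * u p.2
/-- Extended polynomial variables: `Xe 0 = 1` and `Xe (i+1) = X i`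
(the convention `z₀ := 1`). -/
def Xe {s : ℕ} : Fin (s + 1) → MvPolynomial (Fin s) ℝ := Fin.cons 1 MvPolynomial.X

/-- Extended constants: `ce c 0 = 1` and `ce c (i+1) = c i` (the convention `c₀ := 1`). -/
def ce {s : ℕ} (c : Fin s → ℝ) : Fin (s + 1) → ℝ := Fin.cons 1 c

/-!
Take `Q = v vᵀ` with `v = e_r - (u₂ c)_r e_1`, so that
`u₂(z)ᵀ Q u₂(z) = ((u₂ z)_r - (u₂ c)_r)²`. If the `r`-th monomial is `z_i z_j` (with
`z₀ = c₀ = 1`), the identity `z_i z_j - c_i c_j = z_j (z_i - c_i) + c_i (z_j - c_j)` and the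
hypothesis express `z_i z_j - c_i c_j` as `∑ k, g_k h_k` with `deg g_k ≤ 2`. Each `g_k(z)` is then a linear form
`w_k ⬝ᵥ u₂(z)`, so the square is `(W ⬝ᵥ (h(z) ⊗ u₂(z)))²` and `U = W Wᵀ` works.
-/

open MvPolynomial

section MatrixLemmas

variable {R : Type*} [CommRing R] {n : Type*} [Fintype n]

lemma dotProduct_vecMulVec_self_mulVec (v x : n → R) :
    x ⬝ᵥ (vecMulVec v v *ᵥ x) = (v ⬝ᵥ x) ^ 2 := by
  rw [vecMulVec_mulVec, op_smul_eq_smul, dotProduct_smul, smul_eq_mul, dotProduct_comm, sq]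

lemma posSemidef_vecMulVec_self [PartialOrder R] [StarRing R] [TrivialStar R] [StarOrderedRing R]
    (v : n → R) : (vecMulVec v v).PosSemidef := by
  simpa using posSemidef_vecMulVec_self_star v

lemma exists_posSemidef_dotProduct_mulVec_eq_sq [DecidableEq n] {i₀ r : n} (hr : r ≠ i₀)
    (x : ℝ) :
    ∃ Q : Matrix n n ℝ, Q.PosSemidef ∧ Q r r = 1 ∧
      (∀ p q : n, (p ≠ i₀ ∧ p ≠ r) ∨ (q ≠ i₀ ∧ q ≠ r) → Q p q = 0) ∧
      ∀ u : n → ℝ, u ⬝ᵥ (Q *ᵥ u) = (u r - x * u i₀) ^ 2 := by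
  set v : n → ℝ := Pi.single r 1 - Pi.single i₀ x
  have hv : ∀ p, p ≠ i₀ → p ≠ r → v p = 0 := fun p h₀ hr => by simp [v, h₀, hr]
  refine ⟨vecMulVec v v, posSemidef_vecMulVec_self v, by simp [v, vecMulVec_apply, hr], ?_,
    fun u => ?_⟩
  · rintro p q (⟨hp₀, hpr⟩ | ⟨hq₀, hqr⟩)
    · simp [vecMulVec_apply, hv p hp₀ hpr]
    · simp [vecMulVec_apply, hv q hq₀ hqr]
  · rw [dotProduct_vecMulVec_self_mulVec]
    simp [v, sub_dotProduct]

lemma sum_mul_dotProduct_eq_dotProduct_kron {ι κ : Type*} [Fintype ι] [Fintype κ]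
    (v : ι → ℝ) (w : ι → κ → ℝ) (u : κ → ℝ) :
    ∑ k, v k * (w k ⬝ᵥ u) = Function.uncurry w ⬝ᵥ kron v u := by
  simp only [dotProduct, kron, Fintype.sum_prod_type, Finset.mul_sum, Function.uncurry_apply_pair]
  exact Finset.sum_congr rfl fun _ _ => Finset.sum_congr rfl fun _ _ => by ring

end MatrixLemmas

section QuadraticMonomials

variable {s : ℕ}

lemma u2_idx1 (z : Fin s → ℝ) : u2 z (idx1 s) = 1 := by simp [u2, idx1, extv]

lemma exists_u2_eq_extv_mul_extv (i j : Fin (s + 1)) :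
    ∃ t : MonIdx s, ∀ z, u2 z t = extv z i * extv z j := by
  rcases le_total i j with hij | hji
  · exact ⟨⟨(i, j), hij⟩, fun _ => rfl⟩
  · exact ⟨⟨(j, i), hji⟩, fun _ => mul_comm _ _⟩

lemma exists_prod_extv_eq_monomial {n : ℕ} (d : Fin s →₀ ℕ) (hd : d.degree ≤ n) :
    ∃ f : Fin n → Fin (s + 1), ∀ z : Fin s → ℝ,
      (d.prod fun a e => z a ^ e) = ∏ m, extv z (f m) := by
  induction n generalizing d with
  | zero =>
    obtain rfl : d = 0 := (Finsupp.degree_eq_zero_iff d).mp (Nat.le_zero.mp hd)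
    exact ⟨finZeroElim, fun z => by simp⟩
  | succ n ih =>
    by_cases hd0 : d = 0
    · exact ⟨0, fun z => by simp [hd0, extv]⟩
    obtain ⟨a, ha⟩ : ∃ a, d a ≠ 0 := by simpa [Finsupp.ext_iff] using hd0
    have hle : Finsupp.single a 1 ≤ d := Finsupp.single_le_iff.mpr (Nat.one_le_iff_ne_zero.mpr ha)
    obtain ⟨d, rfl⟩ : ∃ d', d = d' + Finsupp.single a 1 := ⟨_, (tsub_add_cancel_of_le hle).symm⟩
    obtain ⟨f, hf⟩ := ih d (by simpa using hd)
    refine ⟨Fin.cons a.succ f, fun z => ?_⟩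
    rw [Finsupp.prod_add_index' (fun _ => pow_zero _) (fun _ _ _ => pow_add _ _ _), hf]
    simp [Fin.prod_univ_succ, extv, mul_comm]

lemma eval_mem_span_u2 (p : MvPolynomial (Fin s) ℝ) (hp : p.totalDegree ≤ 2) :
    (fun z => eval z p) ∈ Submodule.span ℝ (Set.range fun t (z : Fin s → ℝ) => u2 z t) := by
  have hp_sum : (fun z => eval z p) =
      ∑ d ∈ p.support, p.coeff d • fun z => d.prod fun a e => z a ^ e := by
    ext z
    simp [eval_eq, Finsupp.prod]
  rw [hp_sum]
  refine Submodule.sum_mem _ fun d hd => Submodule.smul_mem _ _ (Submodule.subset_span ?_)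
  obtain ⟨f, hf⟩ := exists_prod_extv_eq_monomial d ((le_totalDegree hd).trans hp)
  obtain ⟨t, ht⟩ := exists_u2_eq_extv_mul_extv (f 0) (f 1)
  exact ⟨t, funext fun z => by rw [hf, Fin.prod_univ_two, ← ht]⟩

lemma exists_dotProduct_u2_eq_eval (p : MvPolynomial (Fin s) ℝ) (hp : p.totalDegree ≤ 2) :
    ∃ w : MonIdx s → ℝ, ∀ z, eval z p = w ⬝ᵥ u2 z := by
  obtain ⟨w, hw⟩ := (Submodule.mem_span_range_iff_exists_fun ℝ).mp (eval_mem_span_u2 p hp)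
  exact ⟨w, fun z => by simp [← congr_fun hw z, dotProduct]⟩

end QuadraticMonomials

section IdealMembership

variable {s K : ℕ} {c : Fin s → ℝ} {h : Fin K → MvPolynomial (Fin s) ℝ}

lemma eval_Xe (z : Fin s → ℝ) (i : Fin (s + 1)) : eval z (Xe i) = extv z i := by
  induction i using Fin.cases <;> simp [Xe, extv]

lemma totalDegree_Xe_le (i : Fin (s + 1)) : (Xe i).totalDegree ≤ 1 := by
  induction i using Fin.cases <;> simp [Xe]

lemma exists_Xe_sub_C_eq_sum
    (hlam : ∀ i : Fin s, ∃ lam : Fin K → MvPolynomial (Fin s) ℝ,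
      (∀ k, (lam k).totalDegree ≤ 1) ∧ X i - C (c i) = ∑ k, lam k * h k)
    (i : Fin (s + 1)) :
    ∃ lam : Fin K → MvPolynomial (Fin s) ℝ,
      (∀ k, (lam k).totalDegree ≤ 1) ∧ Xe i - C (ce c i) = ∑ k, lam k * h k := by
  induction i using Fin.cases with
  | zero => exact ⟨0, by simp, by simp [Xe, ce]⟩
  | succ i => simpa [Xe, ce] using hlam i

lemma exists_Xe_mul_Xe_sub_C_eq_sum
    (hlam : ∀ i : Fin s, ∃ lam : Fin K → MvPolynomial (Fin s) ℝ,
      (∀ k, (lam k).totalDegree ≤ 1) ∧ X i - C (c i) = ∑ k, lam k * h k)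
    (i j : Fin (s + 1)) :
    ∃ g : Fin K → MvPolynomial (Fin s) ℝ,
      (∀ k, (g k).totalDegree ≤ 2) ∧
        Xe i * Xe j - C (ce c i * ce c j) = ∑ k, g k * h k := by
  obtain ⟨lamᵢ, hdegᵢ, hᵢ⟩ := exists_Xe_sub_C_eq_sum hlam i
  obtain ⟨lamⱼ, hdegⱼ, hⱼ⟩ := exists_Xe_sub_C_eq_sum hlam j
  refine ⟨fun k => Xe j * lamᵢ k + C (ce c i) * lamⱼ k, fun k => ?_, ?_⟩
  · have hX := (totalDegree_mul (Xe j) (lamᵢ k)).trans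
      (add_le_add (totalDegree_Xe_le j) (hdegᵢ k))
    have hC := (totalDegree_mul (C (ce c i)) (lamⱼ k)).trans_eq (by rw [totalDegree_C, zero_add])
    exact (totalDegree_add _ _).trans (max_le hX ((hC.trans (hdegⱼ k)).trans one_le_two))
  · calc Xe i * Xe j - C (ce c i * ce c j)
        = Xe j * (Xe i - C (ce c i)) + C (ce c i) * (Xe j - C (ce c j)) := by rw [C_mul]; ring
      _ = ∑ k, (Xe j * lamᵢ k + C (ce c i) * lamⱼ k) * h k := by
        simp only [hᵢ, hⱼ, Finset.mul_sum, ← Finset.sum_add_distrib, add_mul, mul_assoc]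

end IdealMembership

theorem stmt15_general (s : ℕ) (c : Fin s → ℝ)
    (K : ℕ) (h : Fin K → MvPolynomial (Fin s) ℝ)
    (hlam : ∀ i : Fin s, ∃ lam : Fin K → MvPolynomial (Fin s) ℝ,
        (∀ k, (lam k).totalDegree ≤ 1) ∧
        MvPolynomial.X i - MvPolynomial.C (c i) = ∑ k, lam k * h k) :
    ∀ r : MonIdx s, r ≠ idx1 s →
      ∃ Q : Matrix (MonIdx s) (MonIdx s) ℝ, Q.PosSemidef ∧ Q r r = 1 ∧
        (∀ p q : MonIdx s, (p ≠ idx1 s ∧ p ≠ r) ∨ (q ≠ idx1 s ∧ q ≠ r) → Q p q = 0) ∧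
        ∃ U : Matrix (Fin K × MonIdx s) (Fin K × MonIdx s) ℝ, U.PosSemidef ∧
          ∀ z : Fin s → ℝ,
            u2 z ⬝ᵥ (Q *ᵥ u2 z) =
              kron (fun k => MvPolynomial.eval z (h k)) (u2 z) ⬝ᵥ
                (U *ᵥ kron (fun k => MvPolynomial.eval z (h k)) (u2 z)) := by
  intro r hr
  obtain ⟨g, hg_deg, hg⟩ := exists_Xe_mul_Xe_sub_C_eq_sum hlam r.1.1 r.1.2
  choose w hw using fun k => exists_dotProduct_u2_eq_eval (g k) (hg_deg k)
  obtain ⟨Q, hQ, hQ_rr, hQ_zero, hQ_form⟩ :=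
    exists_posSemidef_dotProduct_mulVec_eq_sq hr (u2 c r)
  refine ⟨Q, hQ, hQ_rr, hQ_zero, vecMulVec (Function.uncurry w) (Function.uncurry w),
    posSemidef_vecMulVec_self _, fun z => ?_⟩
  rw [hQ_form, dotProduct_vecMulVec_self_mulVec, ← sum_mul_dotProduct_eq_dotProduct_kron,
    u2_idx1, mul_one]
  congr 1
  calc u2 z r - u2 c r = eval z (Xe r.1.1 * Xe r.1.2 - C (ce c r.1.1 * ce c r.1.2)) := by
        simp only [map_sub, map_mul, eval_Xe, eval_C]; rfl
    _ = ∑ k, eval z (h k) * (w k ⬝ᵥ u2 z) := by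
        rw [hg, map_sum]
        exact Finset.sum_congr rfl fun k _ => by rw [map_mul, hw, mul_comm]

/-- under the hypotheses of STATEMENT 10, for every `r ∈ {2,…,N}` there
exist a PSD matrix `Q^r` with `[Q^r]ᵣᵣ = 1`, vanishing outside the rows/columns `{1, r}`,
and a PSD matrix `U^r` such that
`u₂(z)ᵀ Q^r u₂(z) = (h(z) ⊗ u₂(z))ᵀ U^r (h(z) ⊗ u₂(z))` for all `z`. -/
theorem stmt15 (s : ℕ) (hs : 1 ≤ s) (c : Fin s → ℝ) (hc : ∀ i, c i ≠ 0)
    (K : ℕ) (h : Fin K → MvPolynomial (Fin s) ℝ) (a b : Fin K → Fin (s + 1))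
    (hform : ∀ k, h k = Xe (a k) * Xe (b k) - MvPolynomial.C (ce c (a k) * ce c (b k)))
    (hlam : ∀ i : Fin s, ∃ lam : Fin K → MvPolynomial (Fin s) ℝ,
        (∀ k, (lam k).totalDegree ≤ 1) ∧
        MvPolynomial.X i - MvPolynomial.C (c i) = ∑ k, lam k * h k) :
    ∀ r : MonIdx s, r ≠ idx1 s →
      ∃ Q : Matrix (MonIdx s) (MonIdx s) ℝ, Q.PosSemidef ∧ Q r r = 1 ∧
        (∀ p q : MonIdx s, (p ≠ idx1 s ∧ p ≠ r) ∨ (q ≠ idx1 s ∧ q ≠ r) → Q p q = 0) ∧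
        ∃ U : Matrix (Fin K × MonIdx s) (Fin K × MonIdx s) ℝ, U.PosSemidef ∧
          ∀ z : Fin s → ℝ,
            u2 z ⬝ᵥ (Q *ᵥ u2 z) =
              kron (fun k => MvPolynomial.eval z (h k)) (u2 z) ⬝ᵥ
                (U *ᵥ kron (fun k => MvPolynomial.eval z (h k)) (u2 z)) :=
  stmt15_general s c K h hlam
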